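/- Let L₀ ⊆ L₁ be submodules of a finite-dimensional right A-module M and δ ∈ ℤ^n. Then δ(dim L₀) = f_M(δ) and δ(dim L₁) = f_M(δ) hold simultaneously if and only if all of the following hold: f_{L₁/L₀}(δ) = 0, δ(dim L₁) = δ(dim L₀), f_{M/L₁}(δ) = 0, and δ(dim L₀) = f_{L₀}(δ). (Equivalently, δ lies in both normal cones F_{L₀}(M) and F_{L₁}(M) exactly when L₁/L₀ is δ-semistable, f_{M/L₁}(δ) = 0, and δ(dim L₀) = f_{L₀}(δ).) -/

import Mathlib

/-!  Common setup: tropical F-polynomials and general presentations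
for a finite-dimensional basic algebra `A` over `k`, following Fei,
"Tropical F-polynomials and general presentations".
All modules are *right* `A`-modules, encoded as left `Aᵐᵒᵖ`-modules. -/

namespace TropGP

open Module MulOpposite

section Defs

variable (k : Type) [Field k]
variable (A : Type) [Ring A] [Algebra k A]

/-- The right regular `A`-module structure on `A` is compatible with the `k`-action. -/
instance instTowerOpA : IsScalarTower k Aᵐᵒᵖ A :=
  ⟨fun c b x => by
    rw [MulOpposite.smul_eq_mul_unop, MulOpposite.smul_eq_mul_unop, MulOpposite.unop_smul,
      Algebra.mul_smul_comm]⟩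

/-- Shortcut instance: scalars of `k` commute with the right `A`-action. -/
instance (priority := 5000) instSMulCommOpK (M : Type) [AddCommGroup M] [Module k M]
    [Module Aᵐᵒᵖ M] [IsScalarTower k Aᵐᵒᵖ M] : SMulCommClass Aᵐᵒᵖ k M :=
  IsScalarTower.to_smulCommClass'

variable {n : ℕ} (e : Fin n → A)

/-- Pairing of a weight vector with an integral (dimension) vector. -/
def pz (δ β : Fin n → ℤ) : ℤ := ∑ i, δ i * β i

/-- Pairing of an integral weight vector with a real vector. -/
def przr (δ : Fin n → ℤ) (γ : Fin n → ℝ) : ℝ := ∑ i, (δ i : ℝ) * γ i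

/-- Pairing of two real vectors. -/
def prr (δ γ : Fin n → ℝ) : ℝ := ∑ i, δ i * γ i

variable (M : Type) [AddCommGroup M] [Module k M] [Module Aᵐᵒᵖ M] [IsScalarTower k Aᵐᵒᵖ M]

/-- Right multiplication by `e i`, as a `k`-linear endomorphism of a right `A`-module. -/
noncomputable def rmul (i : Fin n) : M →ₗ[k] M where
  toFun x := op (e i) • x
  map_add' x y := smul_add _ x y
  map_smul' c x := smul_comm _ c x

/-- The dimension vector: `i ↦ dim_k (M eᵢ)`. -/
noncomputable def dimVec : Fin n → ℤ :=
  fun i => (finrank k (LinearMap.range (rmul k A e M i)) : ℤ)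

/-- The real dimension vector. -/
noncomputable def dimVecR : Fin n → ℝ :=
  fun i => (finrank k (LinearMap.range (rmul k A e M i)) : ℝ)

/-- The tropical F-polynomial: `f_M(δ) = max { δ(dim L) : L ⊆ M }`. -/
noncomputable def tropF (δ : Fin n → ℤ) : ℤ :=
  sSup (Set.range fun L : Submodule Aᵐᵒᵖ M => pz δ (dimVec k A e L))

/-- The dual tropical F-polynomial: `f̌_M(δ) = max { δ(dim N) : M ↠ N }`. -/
noncomputable def tropCheck (δ : Fin n → ℤ) : ℤ :=
  sSup (Set.range fun L : Submodule Aᵐᵒᵖ M => pz δ (dimVec k A e (M ⧸ L)))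

/-- The Newton polytope of `M`: the convex hull of dimension vectors of submodules. -/
noncomputable def newton : Set (Fin n → ℝ) :=
  convexHull ℝ {x | ∃ L : Submodule Aᵐᵒᵖ M, x = dimVecR k A e L}

/-- The dual Newton polytope of `M`: convex hull of dimension vectors of quotients. -/
noncomputable def newtonCheck : Set (Fin n → ℝ) :=
  convexHull ℝ {x | ∃ L : Submodule Aᵐᵒᵖ M, x = dimVecR k A e (M ⧸ L)}

/-- King's `δ`-semistability. -/
def IsSemistable (δ : Fin n → ℤ) : Prop :=
  pz δ (dimVec k A e M) = 0 ∧ ∀ L : Submodule Aᵐᵒᵖ M, pz δ (dimVec k A e L) ≤ 0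

/-- `δ`-semistability for a real weight. -/
def IsSemistableR (δ : Fin n → ℝ) : Prop :=
  prr δ (dimVecR k A e M) = 0 ∧ ∀ L : Submodule Aᵐᵒᵖ M, prr δ (dimVecR k A e L) ≤ 0

/-- `δ`-stability. -/
def IsStable (δ : Fin n → ℤ) : Prop :=
  pz δ (dimVec k A e M) = 0 ∧
    ∀ L : Submodule Aᵐᵒᵖ M, L ≠ ⊥ → L ≠ ⊤ → pz δ (dimVec k A e L) < 0

section HomE

variable {P Q : Type} [AddCommGroup P] [Module Aᵐᵒᵖ P] [AddCommGroup Q] [Module Aᵐᵒᵖ Q]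

/-- The `k`-linear map `Hom_A(Q, M) → Hom_A(P, M)` induced by `d : P → Q`. -/
noncomputable def homMap (d : P →ₗ[Aᵐᵒᵖ] Q) : (Q →ₗ[Aᵐᵒᵖ] M) →ₗ[k] (P →ₗ[Aᵐᵒᵖ] M) where
  toFun f := f ∘ₗ d
  map_add' f g := LinearMap.add_comp _ _ _
  map_smul' c f := LinearMap.smul_comp _ _ _

/-- `dim_k Hom(d, M)`: the kernel of the induced map. -/
noncomputable def homNum (d : P →ₗ[Aᵐᵒᵖ] Q) : ℕ :=
  finrank k (LinearMap.ker (homMap k A M d))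

/-- `dim_k E(d, M)`: the cokernel of the induced map. -/
noncomputable def eNum (d : P →ₗ[Aᵐᵒᵖ] Q) : ℕ :=
  finrank k ((P →ₗ[Aᵐᵒᵖ] M) ⧸ LinearMap.range (homMap k A M d))

end HomE

/-- The indecomposable projective right module `e i · A`. -/
abbrev projP (i : Fin n) : Submodule Aᵐᵒᵖ A := Submodule.span Aᵐᵒᵖ {e i}

/-- The projective right module `P(β) = ⊕ᵢ (eᵢA)^{β i}`. -/
abbrev PP (β : Fin n → ℕ) : Type := Π i : Fin n, Fin (β i) → projP A e i

/-- The weight condition `β₊ - β₋ = δ`. -/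
def HasWt (βm βp : Fin n → ℕ) (δ : Fin n → ℤ) : Prop :=
  ∀ i, (βp i : ℤ) - (βm i : ℤ) = δ i

/-- The cokernel of a projective presentation. -/
abbrev Coker {βm βp : Fin n → ℕ} (d : PP A e βm →ₗ[Aᵐᵒᵖ] PP A e βp) : Type :=
  PP A e βp ⧸ LinearMap.range d

/-- `hom(δ, M)`: min of `dim_k Hom(d,M)` over projective presentations `d` of weight `δ`. -/
noncomputable def homWt (δ : Fin n → ℤ) : ℕ :=
  sInf {m : ℕ | ∃ (βm βp : Fin n → ℕ) (d : PP A e βm →ₗ[Aᵐᵒᵖ] PP A e βp),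
    HasWt βm βp δ ∧ m = homNum k A M d}

/-- `e(δ, M)`: min of `dim_k E(d,M)` over projective presentations `d` of weight `δ`. -/
noncomputable def eWt (δ : Fin n → ℤ) : ℕ :=
  sInf {m : ℕ | ∃ (βm βp : Fin n → ℕ) (d : PP A e βm →ₗ[Aᵐᵒᵖ] PP A e βp),
    HasWt βm βp δ ∧ m = eNum k A M d}

/-- The indecomposable left module `A · e i`. -/
abbrev projL (i : Fin n) : Submodule A A := Submodule.span A {e i}

section DualMod

variable (V : Type) [AddCommGroup V] [Module k V] [Module A V] [IsScalarTower k A V]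

/-- Left multiplication by `a` as a `k`-linear endomorphism of a left module. -/
noncomputable def lact (a : A) : V →ₗ[k] V where
  toFun x := a • x
  map_add' x y := smul_add a x y
  map_smul' c x := smul_comm a c x

/-- The right `A`-action on the `k`-dual of a left `A`-module. -/
noncomputable instance dualSMul : SMul Aᵐᵒᵖ (V →ₗ[k] k) :=
  ⟨fun a f => f ∘ₗ lact k A V a.unop⟩

@[simp] lemma dual_smul_apply (a : Aᵐᵒᵖ) (f : V →ₗ[k] k) (x : V) :
    (a • f) x = f (a.unop • x) := rfl

/-- The `k`-dual of a left `A`-module is a right `A`-module. -/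
noncomputable instance dualModule : Module Aᵐᵒᵖ (V →ₗ[k] k) :=
  { dualSMul k A V with
    one_smul := fun f => by ext x; simp
    mul_smul := fun a b f => by ext x; simp [mul_smul]
    smul_zero := fun a => by ext x; simp
    smul_add := fun a f g => by ext x; simp
    add_smul := fun a b f => by ext x; simp [add_smul]
    zero_smul := fun f => by ext x; simp }

instance dualSMulComm : SMulCommClass Aᵐᵒᵖ k (V →ₗ[k] k) :=
  ⟨fun a c f => by ext x; simp⟩

instance dualTower : IsScalarTower k Aᵐᵒᵖ (V →ₗ[k] k) :=
  ⟨fun c a f => by ext x; simp [MulOpposite.unop_smul, smul_assoc]⟩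

end DualMod

/-- The indecomposable injective right module `Iᵢ = D(A eᵢ)`,
the `k`-dual of the left module `A eᵢ`. -/
abbrev IP (i : Fin n) : Type := (projL A e i) →ₗ[k] k

/-- The injective right module `I(β) = ⊕ᵢ Iᵢ^{β i}`. -/
abbrev IM (β : Fin n → ℕ) : Type := Π i : Fin n, Fin (β i) → IP k A e i

section PostMap

variable {I J : Type} [AddCommGroup I] [Module k I] [Module Aᵐᵒᵖ I] [IsScalarTower k Aᵐᵒᵖ I]
variable [AddCommGroup J] [Module k J] [Module Aᵐᵒᵖ J] [IsScalarTower k Aᵐᵒᵖ J]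

/-- The `k`-linear map `Hom_A(M, I) → Hom_A(M, J)` induced by `dc : I → J`. -/
noncomputable def postMap (dc : I →ₗ[Aᵐᵒᵖ] J) :
    (M →ₗ[Aᵐᵒᵖ] I) →ₗ[k] (M →ₗ[Aᵐᵒᵖ] J) where
  toFun f := dc ∘ₗ f
  map_add' f g := LinearMap.comp_add _ _ _
  map_smul' c f := by
    ext x
    simp only [LinearMap.comp_apply, LinearMap.smul_apply, RingHom.id_apply]
    rw [← algebraMap_smul Aᵐᵒᵖ c (f x), LinearMap.map_smul, algebraMap_smul]

end PostMap

/-- `hom(M, δ̌)`: min of `dim_k Hom(M, ď)` over injective presentations `ď` of weight `δ̌`. -/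
noncomputable def ihomWt (δc : Fin n → ℤ) : ℕ :=
  sInf {m : ℕ | ∃ (βp βm : Fin n → ℕ) (dc : IM k A e βp →ₗ[Aᵐᵒᵖ] IM k A e βm),
    HasWt βm βp δc ∧ m = finrank k (LinearMap.ker (postMap k A M dc))}

/-- `ě(M, δ̌)`: min of `dim_k Ě(M, ď)` over injective presentations `ď` of weight `δ̌`. -/
noncomputable def ieWt (δc : Fin n → ℤ) : ℕ :=
  sInf {m : ℕ | ∃ (βp βm : Fin n → ℕ) (dc : IM k A e βp →ₗ[Aᵐᵒᵖ] IM k A e βm),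
    HasWt βm βp δc ∧
      m = Module.finrank k (@HasQuotient.Quotient (M →ₗ[Aᵐᵒᵖ] IM k A e βm) _ Submodule.hasQuotient
        (LinearMap.range (postMap k A M dc)))}

/-- `e(δ, δ) = 0`: there are projective presentations `d, d'` of weight `δ` with
`E(d, Coker d') = 0`, i.e. the induced map on `Hom`s is surjective. -/
def EWtSelfZero (δ : Fin n → ℤ) : Prop :=
  ∃ (βm βp : Fin n → ℕ) (d : PP A e βm →ₗ[Aᵐᵒᵖ] PP A e βp)
    (βm' βp' : Fin n → ℕ) (d' : PP A e βm' →ₗ[Aᵐᵒᵖ] PP A e βp'),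
    HasWt βm βp δ ∧ HasWt βm' βp' δ ∧
      Function.Surjective (homMap k A (Coker A e d') d)

/-- `e₁, …, e_n` is a complete set of primitive orthogonal idempotents and `A` is basic:
the indecomposable projectives `eᵢA` are pairwise non-isomorphic. -/
def IsBasicSetup : Prop :=
  (∀ i, IsIdempotentElem (e i)) ∧
  (∀ i j, i ≠ j → e i * e j = 0) ∧
  (∑ i, e i = 1) ∧
  (∀ i, e i ≠ 0 ∧ ∀ f g : A, IsIdempotentElem f → IsIdempotentElem g →
      f * g = 0 → g * f = 0 → f + g = e i → f = 0 ∨ g = 0) ∧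
  (∀ i j, i ≠ j → IsEmpty (projP A e i ≃ₗ[Aᵐᵒᵖ] projP A e j))

end Defs

end TropGP

/-! Write `θ(X) = δ(dim X)`. Since the `eᵢ` are idempotent, `θ` is additive on short exact
sequences, hence modular on the lattice of submodules. For every submodule `L ⊆ M` this gives
`f_{M/L}(δ) + θ(L) ≤ f_M(δ) ≤ f_L(δ) + f_{M/L}(δ)`: submodules of `M/L` lift to submodules of `M`
containing `L`, and `θ(N) = θ(N ∩ L) + θ((N + L)/L)`. Applied to `L₁ ⊆ M` and to `L₀ ⊆ L₁`,
the first inequality gives the forward implication and the second the converse. -/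

namespace TropGP

open Module Submodule MulOpposite

variable {k : Type} [Field k] {A : Type} [Ring A] [Algebra k A] {n : ℕ} {e : Fin n → A}

lemma finrank_map_add_finrank_inf_ker {V W : Type} [AddCommGroup V] [Module k V]
    [AddCommGroup W] [Module k W] [FiniteDimensional k V] (f : V →ₗ[k] W) (p : Submodule k V) :
    finrank k (p.map f) + finrank k ↥(p ⊓ LinearMap.ker f) = finrank k p := by
  have h := LinearMap.finrank_range_add_finrank_ker (f.domRestrict p)
  rwa [LinearMap.range_domRestrict, LinearMap.ker_domRestrict,
    (equivSubtypeMap p _).finrank_eq, map_comap_subtype] at h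

lemma pz_add (δ β γ : Fin n → ℤ) : pz δ (β + γ) = pz δ β + pz δ γ := by
  simp only [pz, Pi.add_apply, mul_add, Finset.sum_add_distrib]

section DimVec

variable {M N : Type} [AddCommGroup M] [Module k M] [Module Aᵐᵒᵖ M] [IsScalarTower k Aᵐᵒᵖ M]
  [AddCommGroup N] [Module k N] [Module Aᵐᵒᵖ N] [IsScalarTower k Aᵐᵒᵖ N]

instance finiteDimensional_submodule [FiniteDimensional k M] (L : Submodule Aᵐᵒᵖ M) :
    FiniteDimensional k L :=
  FiniteDimensional.of_injective (L.subtype.restrictScalars k) L.injective_subtype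

lemma restrictScalars_comp_rmul (f : M →ₗ[Aᵐᵒᵖ] N) (i : Fin n) :
    f.restrictScalars k ∘ₗ rmul k A e M i = rmul k A e N i ∘ₗ f.restrictScalars k :=
  LinearMap.ext fun x => f.map_smul (op (e i)) x

lemma map_range_rmul_of_surjective {f : M →ₗ[Aᵐᵒᵖ] N} (hf : Function.Surjective f)
    (i : Fin n) :
    (LinearMap.range (rmul k A e M i)).map (f.restrictScalars k)
      = LinearMap.range (rmul k A e N i) := by
  rw [← LinearMap.range_comp, restrictScalars_comp_rmul, LinearMap.range_comp,
    (LinearMap.range_eq_top (f := f.restrictScalars k)).mpr hf, Submodule.map_top]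

lemma dimVec_congr (f : M ≃ₗ[Aᵐᵒᵖ] N) : dimVec k A e M = dimVec k A e N := by
  funext i
  rw [dimVec, dimVec, ← map_range_rmul_of_surjective (f := (f : M →ₗ[Aᵐᵒᵖ] N)) f.surjective i]
  exact_mod_cast (LinearEquiv.finrank_map_eq (f.restrictScalars k) _).symm

lemma mem_range_rmul_iff {i : Fin n} (hi : IsIdempotentElem (e i)) {x : M} :
    x ∈ LinearMap.range (rmul k A e M i) ↔ op (e i) • x = x := by
  refine ⟨?_, fun h => ⟨x, h⟩⟩
  rintro ⟨y, rfl⟩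
  show op (e i) • op (e i) • y = op (e i) • y
  rw [smul_smul, ← op_mul, hi.eq]

lemma map_range_rmul_subtype {i : Fin n} (hi : IsIdempotentElem (e i))
    (L : Submodule Aᵐᵒᵖ M) :
    (LinearMap.range (rmul k A e L i)).map (L.subtype.restrictScalars k)
      = LinearMap.range (rmul k A e M i) ⊓ L.restrictScalars k := by
  ext x
  simp only [mem_map, mem_inf, mem_range_rmul_iff hi, restrictScalars_mem]
  constructor
  · rintro ⟨y, hy, rfl⟩
    exact ⟨congrArg Subtype.val hy, y.2⟩
  · rintro ⟨hx, hxL⟩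
    exact ⟨⟨x, hxL⟩, Subtype.ext hx, rfl⟩

lemma dimVec_eq_add_dimVec_quotient [FiniteDimensional k M]
    (hid : ∀ i, IsIdempotentElem (e i)) (L : Submodule Aᵐᵒᵖ M) :
    dimVec k A e M = dimVec k A e L + dimVec k A e (M ⧸ L) := by
  funext i
  have h := finrank_map_add_finrank_inf_ker (L.mkQ.restrictScalars k)
    (LinearMap.range (rmul k A e M i))
  rw [map_range_rmul_of_surjective L.mkQ_surjective, LinearMap.ker_restrictScalars, ker_mkQ,
    ← map_range_rmul_subtype (hid i),
    ← (equivMapOfInjective (L.subtype.restrictScalars k) L.injective_subtype _).finrank_eq] at h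
  simp only [dimVec, Pi.add_apply]
  omega

end DimVec

section Weight

variable {M : Type} [AddCommGroup M] [Module k M] [Module Aᵐᵒᵖ M] [IsScalarTower k Aᵐᵒᵖ M]
  (δ : Fin n → ℤ)

lemma pz_dimVec_map_subtype (N : Submodule Aᵐᵒᵖ M) (S : Submodule Aᵐᵒᵖ N) :
    pz δ (dimVec k A e (S.map N.subtype)) = pz δ (dimVec k A e S) :=
  congrArg (pz δ) (dimVec_congr (k := k) (e := e) (equivSubtypeMap N S)).symm

lemma pz_dimVec_comap_subtype (N X : Submodule Aᵐᵒᵖ M) :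
    pz δ (dimVec k A e (X.comap N.subtype)) = pz δ (dimVec k A e ↥(N ⊓ X)) := by
  rw [← pz_dimVec_map_subtype, map_comap_subtype]

lemma pz_dimVec_bot : pz δ (dimVec k A e (⊥ : Submodule Aᵐᵒᵖ M)) = 0 := by
  have hzero : dimVec k A e (⊥ : Submodule Aᵐᵒᵖ M) = 0 := by
    funext i
    simp [dimVec, finrank_zero_of_subsingleton]
  simp [hzero, pz]

lemma pz_dimVec_top : pz δ (dimVec k A e (⊤ : Submodule Aᵐᵒᵖ M)) = pz δ (dimVec k A e M) := by
  rw [dimVec_congr topEquiv]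

variable [FiniteDimensional k M] {δ} (hid : ∀ i, IsIdempotentElem (e i))
include hid

lemma pz_dimVec_eq_add_of_le {L N : Submodule Aᵐᵒᵖ M} (h : L ≤ N) :
    pz δ (dimVec k A e N)
      = pz δ (dimVec k A e L) + pz δ (dimVec k A e (N ⧸ L.comap N.subtype)) := by
  rw [dimVec_eq_add_dimVec_quotient hid (L.comap N.subtype), pz_add,
    dimVec_congr (comapSubtypeEquivOfLe h)]

lemma pz_dimVec_comap_mkQ (L : Submodule Aᵐᵒᵖ M) (S : Submodule Aᵐᵒᵖ (M ⧸ L)) :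
    pz δ (dimVec k A e (S.comap L.mkQ)) = pz δ (dimVec k A e L) + pz δ (dimVec k A e S) := by
  set N := S.comap L.mkQ
  have hLN : L ≤ N := by
    simpa only [ker_mkQ] using LinearMap.ker_le_comap L.mkQ (p := S)
  have hker : LinearMap.ker (L.mkQ ∘ₗ N.subtype) = L.comap N.subtype := by
    rw [LinearMap.ker_comp, ker_mkQ]
  have hrange : LinearMap.range (L.mkQ ∘ₗ N.subtype) = S := by
    rw [LinearMap.range_comp, range_subtype, map_comap_eq_of_surjective L.mkQ_surjective]
  rw [pz_dimVec_eq_add_of_le hid hLN, dimVec_congr ((quotEquivOfEq _ _ hker.symm).trans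
    ((LinearMap.quotKerEquivRange _).trans (LinearEquiv.ofEq _ _ hrange)))]

lemma pz_dimVec_sup_add_inf (X Y : Submodule Aᵐᵒᵖ M) :
    pz δ (dimVec k A e ↥(X ⊔ Y)) + pz δ (dimVec k A e ↥(X ⊓ Y))
      = pz δ (dimVec k A e X) + pz δ (dimVec k A e Y) := by
  rw [pz_dimVec_eq_add_of_le hid (le_sup_right : Y ≤ X ⊔ Y),
    pz_dimVec_eq_add_of_le hid (inf_le_left : X ⊓ Y ≤ X), comap_inf,
    dimVec_congr (LinearMap.quotientInfEquivSupQuotient X Y)]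
  ring

end Weight

section TropF

variable {M : Type} [AddCommGroup M] [Module k M] [Module Aᵐᵒᵖ M] [IsScalarTower k Aᵐᵒᵖ M]
  (δ : Fin n → ℤ)

lemma tropF_congr {N : Type} [AddCommGroup N] [Module k N] [Module Aᵐᵒᵖ N]
    [IsScalarTower k Aᵐᵒᵖ N] (f : M ≃ₗ[Aᵐᵒᵖ] N) : tropF k A e M δ = tropF k A e N δ := by
  rw [tropF, tropF, ← (orderIsoMapComap f).surjective.range_comp]
  refine congrArg (fun g => sSup (Set.range g)) (funext fun S => ?_)
  exact congrArg (pz δ) (dimVec_congr (k := k) (e := e) (f.submoduleMap S))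

lemma tropF_le {b : ℤ} (h : ∀ L : Submodule Aᵐᵒᵖ M, pz δ (dimVec k A e L) ≤ b) :
    tropF k A e M δ ≤ b :=
  csSup_le (Set.range_nonempty _) (Set.forall_mem_range.mpr h)

variable [FiniteDimensional k M]

lemma bddAbove_range_pz_dimVec :
    BddAbove (Set.range fun L : Submodule Aᵐᵒᵖ M => pz δ (dimVec k A e L)) := by
  refine ⟨∑ i, |δ i| * (finrank k M : ℤ), Set.forall_mem_range.mpr fun L => ?_⟩
  refine Finset.sum_le_sum fun i _ => ?_
  have hdim : dimVec k A e L i ≤ finrank k M := by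
    have := (LinearMap.finrank_range_le (rmul k A e L i)).trans
      (LinearMap.finrank_le_finrank_of_injective (f := L.subtype.restrictScalars k)
        L.injective_subtype)
    simp only [dimVec]
    exact_mod_cast this
  calc δ i * dimVec k A e L i ≤ |δ i| * dimVec k A e L i :=
        mul_le_mul_of_nonneg_right (le_abs_self _) (Int.natCast_nonneg _)
    _ ≤ |δ i| * finrank k M := mul_le_mul_of_nonneg_left hdim (abs_nonneg _)

lemma le_tropF (L : Submodule Aᵐᵒᵖ M) : pz δ (dimVec k A e L) ≤ tropF k A e M δ :=
  le_csSup (bddAbove_range_pz_dimVec δ) ⟨L, rfl⟩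

lemma tropF_nonneg : 0 ≤ tropF k A e M δ :=
  pz_dimVec_bot (k := k) (e := e) (M := M) δ ▸ le_tropF δ ⊥

lemma pz_dimVec_le_tropF : pz δ (dimVec k A e M) ≤ tropF k A e M δ :=
  pz_dimVec_top (k := k) (e := e) (M := M) δ ▸ le_tropF δ ⊤

lemma pz_dimVec_le_tropF_of_le {X L : Submodule Aᵐᵒᵖ M} (h : X ≤ L) :
    pz δ (dimVec k A e X) ≤ tropF k A e L δ := by
  have := le_tropF (k := k) (e := e) δ (X.comap L.subtype)
  rwa [pz_dimVec_comap_subtype, inf_eq_right.mpr h] at this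

lemma tropF_submodule_le (L : Submodule Aᵐᵒᵖ M) : tropF k A e L δ ≤ tropF k A e M δ :=
  tropF_le δ fun S =>
    pz_dimVec_map_subtype (k := k) δ L S ▸ le_tropF (k := k) δ (S.map L.subtype)

variable {δ} (hid : ∀ i, IsIdempotentElem (e i))
include hid

lemma tropF_quotient_add_le (L : Submodule Aᵐᵒᵖ M) :
    tropF k A e (M ⧸ L) δ + pz δ (dimVec k A e L) ≤ tropF k A e M δ := by
  have h : tropF k A e (M ⧸ L) δ ≤ tropF k A e M δ - pz δ (dimVec k A e L) :=
    tropF_le δ fun S => by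
      have := le_tropF (k := k) (e := e) δ (S.comap L.mkQ)
      rw [pz_dimVec_comap_mkQ hid] at this
      linarith
  linarith

lemma tropF_le_tropF_add_tropF_quotient (L : Submodule Aᵐᵒᵖ M) :
    tropF k A e M δ ≤ tropF k A e L δ + tropF k A e (M ⧸ L) δ := by
  refine tropF_le δ fun N => ?_
  have hsup : (N.map L.mkQ).comap L.mkQ = N ⊔ L := by rw [comap_map_eq, ker_mkQ]
  have hquot := pz_dimVec_comap_mkQ (k := k) (δ := δ) hid L (N.map L.mkQ)
  rw [hsup] at hquot
  linarith [pz_dimVec_sup_add_inf (k := k) (δ := δ) hid N L,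
    le_tropF (k := k) (e := e) δ (N.map L.mkQ),
    pz_dimVec_le_tropF_of_le (k := k) (e := e) δ (inf_le_right : N ⊓ L ≤ L)]

end TropF

end TropGP

open TropGP Module MulOpposite

theorem statement12_general (k : Type) [Field k]
    (A : Type) [Ring A] [Algebra k A]
    {n : ℕ} (e : Fin n → A) (hA : IsBasicSetup A e)
    (M : Type) [AddCommGroup M] [Module k M] [Module Aᵐᵒᵖ M]
    [IsScalarTower k Aᵐᵒᵖ M] [FiniteDimensional k M]
    (L₀ L₁ : Submodule Aᵐᵒᵖ M) (hle : L₀ ≤ L₁) (δ : Fin n → ℤ) :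
    (pz δ (dimVec k A e L₀) = tropF k A e M δ ∧
     pz δ (dimVec k A e L₁) = tropF k A e M δ) ↔
      (tropF k A e (L₁ ⧸ (Submodule.comap L₁.subtype L₀)) δ = 0 ∧
       pz δ (dimVec k A e L₁) = pz δ (dimVec k A e L₀) ∧
       tropF k A e (M ⧸ L₁) δ = 0 ∧
       pz δ (dimVec k A e L₀) = tropF k A e L₀ δ) := by
  have hid := hA.1
  let L₀' := L₀.comap L₁.subtype
  have hL₀' : L₀' ≃ₗ[Aᵐᵒᵖ] L₀ := Submodule.comapSubtypeEquivOfLe hle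
  constructor
  · rintro ⟨h₀, h₁⟩
    have hquot₀ := tropF_quotient_add_le (k := k) (δ := δ) hid L₀'
    have hquot₁ := tropF_quotient_add_le (k := k) (δ := δ) hid L₁
    rw [dimVec_congr hL₀'] at hquot₀
    refine ⟨le_antisymm ?_ (tropF_nonneg δ), h₁.trans h₀.symm,
      le_antisymm (by linarith) (tropF_nonneg δ),
      le_antisymm (pz_dimVec_le_tropF δ) (h₀ ▸ tropF_submodule_le δ L₀)⟩
    linarith [tropF_submodule_le (k := k) (e := e) δ L₁]
  · rintro ⟨hquot₀, h₁₀, hquot₁, h₀⟩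
    have hmax : tropF k A e M δ ≤ pz δ (dimVec k A e L₀) := calc
      tropF k A e M δ ≤ tropF k A e L₁ δ + tropF k A e (M ⧸ L₁) δ :=
        tropF_le_tropF_add_tropF_quotient hid L₁
      _ ≤ tropF k A e L₀' δ + tropF k A e (L₁ ⧸ L₀') δ := by
        rw [hquot₁, add_zero]
        exact tropF_le_tropF_add_tropF_quotient hid L₀'
      _ = pz δ (dimVec k A e L₀) := by rw [hquot₀, add_zero, tropF_congr δ hL₀', h₀]
    have h := le_antisymm (le_tropF δ L₀) hmax
    exact ⟨h, h₁₀.trans h⟩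

/-- For submodules `L₀ ⊆ L₁ ⊆ M` and `δ ∈ ℤⁿ`: both `δ(dim L₀) = f_M(δ)`
and `δ(dim L₁) = f_M(δ)` hold iff `f_{L₁/L₀}(δ) = 0`, `δ(dim L₁) = δ(dim L₀)`,
`f_{M/L₁}(δ) = 0` and `δ(dim L₀) = f_{L₀}(δ)`. -/
theorem statement12 (k : Type) [Field k] [IsAlgClosed k] [CharZero k]
    (A : Type) [Ring A] [Algebra k A] [FiniteDimensional k A]
    {n : ℕ} (e : Fin n → A) (hA : IsBasicSetup A e)
    (M : Type) [AddCommGroup M] [Module k M] [Module Aᵐᵒᵖ M]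
    [IsScalarTower k Aᵐᵒᵖ M] [FiniteDimensional k M]
    (L₀ L₁ : Submodule Aᵐᵒᵖ M) (hle : L₀ ≤ L₁) (δ : Fin n → ℤ) :
    (pz δ (dimVec k A e L₀) = tropF k A e M δ ∧
     pz δ (dimVec k A e L₁) = tropF k A e M δ) ↔
      (tropF k A e (L₁ ⧸ (Submodule.comap L₁.subtype L₀)) δ = 0 ∧
       pz δ (dimVec k A e L₁) = pz δ (dimVec k A e L₀) ∧
       tropF k A e (M ⧸ L₁) δ = 0 ∧
       pz δ (dimVec k A e L₀) = tropF k A e L₀ δ) :=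
  statement12_general k A e hA M L₀ L₁ hle δ
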